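/- Marshalling correspondence preserves the pointer graph structure exactly: if correspondence is the smallest relation containing (a₀, b₀) and closed under taking equally-indexed components of corresponding equal-length buffers, and it satisfies the axioms that corresponding objects agree on boxedness and buffer length and that corresponding pointers are equal iff their counterparts are equal, then the induced map on the reachable substructures of a₀ is a graph isomorphism onto the reachable substructures of b₀ (bijective on reachable nodes and preserving the points-to edges with labels). -/

import Mathlib

/-- Heap values: unboxed words, or pointers to buffers. -/
inductive Value where
  | unboxed (z : ℤ)
  | ptr (a : ℕ)
deriving DecidableEq

/-- A heap maps each address to the buffer (list of values) it holds. -/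
def Heap : Type := ℕ → List Value

/-- Reachability from a root value: the closure under following pointers to
buffer elements. -/
inductive Reach (heap : Heap) (root : Value) : Value → Prop
  | root : Reach heap root root
  | step {p : ℕ} {v : Value} :
      Reach heap root (.ptr p) → v ∈ heap p → Reach heap root v

/-- `Edge heap v i w`: the buffer pointed by `v` has `w` as its `i`-th
component (a points-to edge labeled `i`). -/
def Edge (heap : Heap) (v : Value) (i : ℕ) (w : Value) : Prop :=
  ∃ p : ℕ, v = .ptr p ∧ (heap p)[i]? = some w

/-- Closure of a relation under taking equally-indexed components of
corresponding buffers. -/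
def ClosedUnderComponents (heap₁ heap₂ : Heap) (S : Value → Value → Prop) : Prop :=
  ∀ p q : ℕ, S (.ptr p) (.ptr q) →
    ∀ (i : ℕ) (h₁ : i < (heap₁ p).length) (h₂ : i < (heap₂ q).length),
      S ((heap₁ p).get ⟨i, h₁⟩) ((heap₂ q).get ⟨i, h₂⟩)

/-! The correspondence is read off along paths: by induction on reachability, each node reachable
from `a₀` is related to one reachable from `b₀`, because every edge out of a related pointer has a
related counterpart with the same label (equal buffer lengths plus closure under components).
Functionality and injectivity need no induction: the boxedness axiom forces related values to have
the same shape, and then the payload and pointer-equality axioms pin the partner down. Swapping the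
two heaps and flipping `R` preserves all the hypotheses, which gives the reverse directions. -/

section Marshalling

variable {heap heap₁ heap₂ : Heap} {R : Value → Value → Prop}

theorem mem_iff_exists_edge {p : ℕ} {v : Value} : v ∈ heap p ↔ ∃ i, Edge heap (.ptr p) i v := by
  simp [Edge, List.mem_iff_getElem?]

theorem Reach.of_edge {r a w : Value} {i : ℕ} (ha : Reach heap r a) (hedge : Edge heap a i w) :
    Reach heap r w := by
  obtain ⟨p, rfl, hget⟩ := hedge
  exact ha.step (List.mem_of_getElem? hget)

theorem ClosedUnderComponents.flip (hclosed : ClosedUnderComponents heap₁ heap₂ R) :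
    ClosedUnderComponents heap₂ heap₁ (flip R) :=
  fun q p hpq i h₂ h₁ => hclosed p q hpq i h₁ h₂

theorem exists_ptr_of_rel_ptr
    (hbox : ∀ a b, R a b → ((∃ z, a = .unboxed z) ↔ (∃ z, b = .unboxed z)))
    {p : ℕ} {b : Value} (hpb : R (.ptr p) b) : ∃ q, b = .ptr q := by
  cases b with
  | unboxed z => simpa using (hbox _ _ hpb).mpr ⟨z, rfl⟩
  | ptr q => exact ⟨q, rfl⟩

theorem Edge.exists_rel (hclosed : ClosedUnderComponents heap₁ heap₂ R)
    (hbox : ∀ a b, R a b → ((∃ z, a = .unboxed z) ↔ (∃ z, b = .unboxed z)))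
    (hlen : ∀ p q : ℕ, R (.ptr p) (.ptr q) → (heap₁ p).length = (heap₂ q).length)
    {a b w : Value} {i : ℕ} (hab : R a b) (hedge : Edge heap₁ a i w) :
    ∃ w', Edge heap₂ b i w' ∧ R w w' := by
  obtain ⟨p, rfl, hget⟩ := hedge
  obtain ⟨q, rfl⟩ := exists_ptr_of_rel_ptr hbox hab
  obtain ⟨h₁, rfl⟩ := List.getElem?_eq_some_iff.mp hget
  have h₂ : i < (heap₂ q).length := hlen p q hab ▸ h₁
  exact ⟨(heap₂ q)[i], ⟨q, rfl, List.getElem?_eq_getElem h₂⟩, hclosed p q hab i h₁ h₂⟩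

theorem Reach.exists_rel {a₀ b₀ : Value} (hR₀ : R a₀ b₀)
    (hclosed : ClosedUnderComponents heap₁ heap₂ R)
    (hbox : ∀ a b, R a b → ((∃ z, a = .unboxed z) ↔ (∃ z, b = .unboxed z)))
    (hlen : ∀ p q : ℕ, R (.ptr p) (.ptr q) → (heap₁ p).length = (heap₂ q).length)
    {a : Value} (ha : Reach heap₁ a₀ a) : ∃ b, R a b ∧ Reach heap₂ b₀ b := by
  induction ha with
  | root => exact ⟨b₀, hR₀, .root⟩
  | step _ hv ih =>
    obtain ⟨b, hb, hreach⟩ := ih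
    obtain ⟨i, hedge⟩ := mem_iff_exists_edge.mp hv
    obtain ⟨w', hedge', hw'⟩ := hedge.exists_rel hclosed hbox hlen hb
    exact ⟨w', hw', hreach.of_edge hedge'⟩

theorem eq_of_rel_of_rel
    (hbox : ∀ a b, R a b → ((∃ z, a = .unboxed z) ↔ (∃ z, b = .unboxed z)))
    (hunboxed : ∀ z w : ℤ, R (.unboxed z) (.unboxed w) → z = w)
    (hptr : ∀ p₁ q₁ p₂ q₂ : ℕ, R (.ptr p₁) (.ptr q₁) → R (.ptr p₂) (.ptr q₂) →
      (p₁ = p₂ ↔ q₁ = q₂))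
    {a b b' : Value} (hab : R a b) (hab' : R a b') : b = b' := by
  cases a with
  | unboxed z =>
    obtain ⟨w, rfl⟩ := (hbox _ _ hab).mp ⟨z, rfl⟩
    obtain ⟨w', rfl⟩ := (hbox _ _ hab').mp ⟨z, rfl⟩
    rw [← hunboxed z w hab, ← hunboxed z w' hab']
  | ptr p =>
    obtain ⟨q, rfl⟩ := exists_ptr_of_rel_ptr hbox hab
    obtain ⟨q', rfl⟩ := exists_ptr_of_rel_ptr hbox hab'
    rw [(hptr p q p q' hab hab').mp rfl]

end Marshalling

theorem marshalling_graph_isomorphism_general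
    (heap₁ heap₂ : Heap) (a₀ b₀ : Value) (R : Value → Value → Prop)
    (hR₀ : R a₀ b₀)
    (hclosed : ClosedUnderComponents heap₁ heap₂ R)
    (hbox : ∀ a b, R a b → ((∃ z, a = .unboxed z) ↔ (∃ z, b = .unboxed z)))
    (hlen : ∀ p q : ℕ, R (.ptr p) (.ptr q) → (heap₁ p).length = (heap₂ q).length)
    (hunboxed : ∀ z w : ℤ, R (.unboxed z) (.unboxed w) → z = w)
    (hptr : ∀ p₁ q₁ p₂ q₂ : ℕ, R (.ptr p₁) (.ptr q₁) → R (.ptr p₂) (.ptr q₂) →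
      (p₁ = p₂ ↔ q₁ = q₂)) :
    (∀ a, Reach heap₁ a₀ a → ∃ b, R a b ∧ Reach heap₂ b₀ b) ∧
    (∀ b, Reach heap₂ b₀ b → ∃ a, R a b ∧ Reach heap₁ a₀ a) ∧
    (∀ a b b', Reach heap₁ a₀ a → R a b → R a b' → b = b') ∧
    (∀ a a' b, Reach heap₂ b₀ b → R a b → R a' b → a = a') ∧
    (∀ a b, R a b → ∀ i w, Edge heap₁ a i w → ∃ w', Edge heap₂ b i w' ∧ R w w') ∧
    (∀ a b, R a b → ∀ i w', Edge heap₂ b i w' → ∃ w, Edge heap₁ a i w ∧ R w w') := by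
  have hbox' : ∀ b a, flip R b a → ((∃ z, b = .unboxed z) ↔ (∃ z, a = .unboxed z)) :=
    fun b a hab => (hbox a b hab).symm
  have hlen' : ∀ q p : ℕ, flip R (.ptr q) (.ptr p) → (heap₂ q).length = (heap₁ p).length :=
    fun q p hpq => (hlen p q hpq).symm
  have hunboxed' : ∀ w z : ℤ, flip R (.unboxed w) (.unboxed z) → w = z :=
    fun w z hzw => (hunboxed z w hzw).symm
  have hptr' : ∀ q₁ p₁ q₂ p₂ : ℕ, flip R (.ptr q₁) (.ptr p₁) → flip R (.ptr q₂) (.ptr p₂) →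
      (q₁ = q₂ ↔ p₁ = p₂) :=
    fun q₁ p₁ q₂ p₂ h₁ h₂ => (hptr p₁ q₁ p₂ q₂ h₁ h₂).symm
  exact ⟨fun _ ha => ha.exists_rel hR₀ hclosed hbox hlen,
    fun _ hb => hb.exists_rel (R := flip R) hR₀ hclosed.flip hbox' hlen',
    fun _ _ _ _ hab hab' => eq_of_rel_of_rel hbox hunboxed hptr hab hab',
    fun _ _ _ _ hab hab' => eq_of_rel_of_rel (R := flip R) hbox' hunboxed' hptr' hab hab',
    fun _ _ hab _ _ hedge => hedge.exists_rel hclosed hbox hlen hab,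
    fun _ _ hab _ _ hedge => hedge.exists_rel (R := flip R) hclosed.flip hbox' hlen' hab⟩

/-- marshalling correspondence preserves the pointer-graph
structure exactly: if `R` is the smallest relation containing `(a₀, b₀)` and
closed under taking equally-indexed components of corresponding buffers, and
it satisfies the marshalling axioms (agreement on boxedness and buffer
lengths, equality of corresponding unboxed payloads, and preservation of
pointer equality), then `R` induces a graph isomorphism between the
substructures reachable from `a₀` and from `b₀`: it is total, functional,
injective and surjective on reachable nodes, and preserves the labeled
points-to edges in both directions. -/
theorem marshalling_graph_isomorphism
    (heap₁ heap₂ : Heap) (a₀ b₀ : Value) (R : Value → Value → Prop)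
    (hR₀ : R a₀ b₀)
    (hclosed : ClosedUnderComponents heap₁ heap₂ R)
    (hsmallest : ∀ S : Value → Value → Prop,
      S a₀ b₀ → ClosedUnderComponents heap₁ heap₂ S → ∀ a b, R a b → S a b)
    (hbox : ∀ a b, R a b → ((∃ z, a = .unboxed z) ↔ (∃ z, b = .unboxed z)))
    (hlen : ∀ p q : ℕ, R (.ptr p) (.ptr q) → (heap₁ p).length = (heap₂ q).length)
    (hunboxed : ∀ z w : ℤ, R (.unboxed z) (.unboxed w) → z = w)
    (hptr : ∀ p₁ q₁ p₂ q₂ : ℕ, R (.ptr p₁) (.ptr q₁) → R (.ptr p₂) (.ptr q₂) →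
      (p₁ = p₂ ↔ q₁ = q₂)) :
    (∀ a, Reach heap₁ a₀ a → ∃ b, R a b ∧ Reach heap₂ b₀ b) ∧
    (∀ b, Reach heap₂ b₀ b → ∃ a, R a b ∧ Reach heap₁ a₀ a) ∧
    (∀ a b b', Reach heap₁ a₀ a → R a b → R a b' → b = b') ∧
    (∀ a a' b, Reach heap₂ b₀ b → R a b → R a' b → a = a') ∧
    (∀ a b, R a b → ∀ i w, Edge heap₁ a i w → ∃ w', Edge heap₂ b i w' ∧ R w w') ∧
    (∀ a b, R a b → ∀ i w', Edge heap₂ b i w' → ∃ w, Edge heap₁ a i w ∧ R w w') :=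
  marshalling_graph_isomorphism_general heap₁ heap₂ a₀ b₀ R hR₀ hclosed hbox hlen hunboxed hptr
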